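/- arXiv:1811.08047 — 3 statements merged into one kernel-verified Lean document; each statement's English description precedes it below -/
import Mathlib

section
/- For the Weibull survival function F̄(T) = exp(-(T/r)^k) with k > 1, r > 0, and ρ ∈ (0,1), the unique positive solution T* of the equation (T/F̄(T))·F̄'(T) - ln F̄(T) - 2 ln ρ = 0 is T* = (2 r^k ln ρ/(1-k))^{1/k}, and T* does not depend on the system longevity L. -/
/-!
Writing `x = T / r`, the Weibull hazard satisfies `T · F̄'(T) / F̄(T) = -k xᵏ` while
`ln F̄(T) = -xᵏ`, so the left-hand side of the equation collapses to `(1 - k) xᵏ - 2 ln ρ`.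
Thus the equation says `Tᵏ = 2 rᵏ ln ρ / (1 - k)`, whose right-hand side is positive because
`ln ρ < 0` and `1 - k < 0`; taking `k`-th roots of positive reals gives the unique solution.
-/

open Real

lemma hasDerivAt_exp_neg_div_rpow {r k T : ℝ} (hT : T / r ≠ 0) :
    HasDerivAt (fun t => exp (-(t / r) ^ k))
      (exp (-(T / r) ^ k) * -(1 / r * k * (T / r) ^ (k - 1))) T :=
  (((hasDerivAt_id' T).div_const r).rpow_const (Or.inl hT)).neg.exp

lemma mul_deriv_div_sub_log_exp_neg_div_rpow {r k T : ℝ} (hT : T / r ≠ 0) :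
    T / exp (-(T / r) ^ k) * deriv (fun t => exp (-(t / r) ^ k)) T
        - log (exp (-(T / r) ^ k)) = (1 - k) * (T / r) ^ k := by
  obtain ⟨hT0, hr⟩ := div_ne_zero_iff.mp hT
  rw [(hasDerivAt_exp_neg_div_rpow hT).deriv, log_exp, rpow_sub_one hT]
  field_simp
  ring

/-- For the Weibull survival function `F̄(T) = exp(-(T/r)^k)`, `k > 1`, `ρ ∈ (0,1)`,
the unique positive solution of `(T/F̄(T))·F̄'(T) - ln F̄(T) - 2 ln ρ = 0` is
`T* = (2 r^k ln ρ/(1-k))^(1/k)`; in particular `T*` does not depend on `L`. -/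
theorem stmt_3 (ρ r k : ℝ) (hρ : ρ ∈ Set.Ioo (0:ℝ) 1) (hr : 0 < r) (hk : 1 < k)
    (Fbar : ℝ → ℝ) (hF : ∀ t, Fbar t = Real.exp (-(t / r) ^ k))
    (Tstar : ℝ) (hTstar : Tstar = (2 * r ^ k * Real.log ρ / (1 - k)) ^ (1 / k)) :
    0 < Tstar ∧
    (∀ T : ℝ, 0 < T →
      ((T / Fbar T) * deriv Fbar T - Real.log (Fbar T) - 2 * Real.log ρ = 0 ↔
        T = Tstar)) := by
  obtain rfl : Fbar = fun t => exp (-(t / r) ^ k) := funext hF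
  have hlogρ : log ρ < 0 := log_neg hρ.1 hρ.2
  have hrk : 0 < r ^ k := rpow_pos_of_pos hr k
  have hpos : 0 < 2 * r ^ k * log ρ / (1 - k) :=
    div_pos_of_neg_of_neg (by nlinarith) (by linarith)
  refine ⟨hTstar ▸ rpow_pos_of_pos hpos _, fun T hT => ?_⟩
  rw [mul_deriv_div_sub_log_exp_neg_div_rpow (div_pos hT hr).ne', hTstar, one_div,
    eq_rpow_inv hT.le hpos.le (by linarith), div_rpow hT.le hr.le,
    eq_div_iff (by linarith), sub_eq_zero, mul_div_assoc', div_eq_iff hrk.ne']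
  constructor <;> intro h <;> linear_combination h
end

section
/- The maximal worst-case reliability over all rejuvenation periods, max_{T>0} ρ^{2(L/T-1)} exp(-(L/T)(T/r)^k), equals ρ^{-2} · exp(L·φ(T*)) where T* = (2 r^k ln ρ/(1-k))^{1/k} and φ(T*) = (2 ln ρ - (T*/r)^k)/T* = (2k ln ρ/(k-1))/T* < 0; in particular the maximal reliability is strictly decreasing in L. -/
open Real in
lemma stmt_6_amgm {x y k : ℝ} (hx : 0 < x) (hy : 0 < y) (hk : 1 < k) :
    k * (x ^ (k - 1) * y) ≤ (k - 1) * x ^ k + y ^ k := by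
  have hk0 : (0:ℝ) < k := by linarith
  have h := Real.geom_mean_le_arith_mean2_weighted
    (w₁ := (k-1)/k) (w₂ := 1/k) (p₁ := x ^ k) (p₂ := y ^ k)
    (div_nonneg (by linarith) hk0.le) (by positivity) (by positivity) (by positivity) (by field_simp; ring)
  have e1 : (x ^ k) ^ ((k-1)/k) = x ^ (k-1) := by
    rw [← Real.rpow_mul hx.le]; congr 1; field_simp
  have e2 : (y ^ k) ^ ((1:ℝ)/k) = y := by
    rw [← Real.rpow_mul hy.le, mul_one_div, div_self (ne_of_gt hk0)]
    simp
  rw [e1, e2] at h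
  have h2 := mul_le_mul_of_nonneg_left h hk0.le
  calc k * (x ^ (k-1) * y) ≤ k * ((k-1)/k * x ^ k + 1/k * y ^ k) := h2
    _ = (k - 1) * x ^ k + y ^ k := by field_simp

/-- The maximal worst-case reliability over all rejuvenation periods `T > 0`
equals `ρ⁻² · exp(L·φ(T*))` with `φ(T*) = (2k ln ρ/(k-1))/T* < 0`, and this
maximal reliability is strictly decreasing in the longevity `L`. -/
theorem stmt_6 (ρ r k : ℝ) (hρ : ρ ∈ Set.Ioo (0:ℝ) 1) (hr : 0 < r) (hk : 1 < k)
    (φ : ℝ → ℝ) (hφ : ∀ T, φ T = (2 * Real.log ρ - (T / r) ^ k) / T)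
    (R : ℝ → ℝ → ℝ)
    (hR : ∀ L T, R L T = ρ ^ (2 * (L / T - 1)) * Real.exp (-(L / T) * (T / r) ^ k))
    (Tstar : ℝ) (hTstar : Tstar = (2 * r ^ k * Real.log ρ / (1 - k)) ^ (1 / k)) :
    (∀ L : ℝ, 0 < L → ∀ T : ℝ, 0 < T → R L T ≤ ρ ^ (-2 : ℝ) * Real.exp (L * φ Tstar)) ∧
    (∀ L : ℝ, 0 < L → R L Tstar = ρ ^ (-2 : ℝ) * Real.exp (L * φ Tstar)) ∧
    φ Tstar = (2 * k * Real.log ρ / (k - 1)) / Tstar ∧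
    φ Tstar < 0 ∧
    (∀ L₁ L₂ : ℝ, 0 < L₁ → L₁ < L₂ →
      ρ ^ (-2 : ℝ) * Real.exp (L₂ * φ Tstar) < ρ ^ (-2 : ℝ) * Real.exp (L₁ * φ Tstar)) := by
  obtain ⟨hρ0, hρ1⟩ := hρ
  have hlog : Real.log ρ < 0 := Real.log_neg hρ0 hρ1
  have hk0 : (0:ℝ) < k := by linarith
  have hk1 : k - 1 > 0 := by linarith
  have hrk : (0:ℝ) < r ^ k := Real.rpow_pos_of_pos hr k
  have hB : 0 < 2 * r ^ k * Real.log ρ / (1 - k) :=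
    div_pos_of_neg_of_neg (by nlinarith) (by linarith)
  have hc : 0 < Tstar := by rw [hTstar]; exact Real.rpow_pos_of_pos hB _
  have hck : Tstar ^ k = 2 * r ^ k * Real.log ρ / (1 - k) := by
    rw [hTstar, ← Real.rpow_mul hB.le, one_div,
      inv_mul_cancel₀ (ne_of_gt hk0), Real.rpow_one]
  -- (Tstar/r)^k
  have hdiv : (Tstar / r) ^ k = Tstar ^ k / r ^ k := Real.div_rpow hc.le hr.le k
  have h1k : (1:ℝ) - k ≠ 0 := by linarith
  have hk1ne : k - 1 ≠ 0 := ne_of_gt hk1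
  have hTsne : Tstar ≠ 0 := ne_of_gt hc
  have hrkne : r ^ k ≠ 0 := ne_of_gt hrk
  have hlogrw : 2 * Real.log ρ = (1 - k) * Tstar ^ k / r ^ k := by
    rw [hck]; field_simp
  -- value of φ at Tstar
  have hφstar : φ Tstar = (2 * k * Real.log ρ / (k - 1)) / Tstar := by
    rw [hφ, hdiv, hck]
    field_simp
    ring
  have hφneg : φ Tstar < 0 := by
    rw [hφstar]
    apply div_neg_of_neg_of_pos _ hc
    apply div_neg_of_neg_of_pos _ hk1
    nlinarith
  -- key: φ T ≤ φ Tstar for T > 0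
  have key : ∀ T : ℝ, 0 < T → φ T ≤ φ Tstar := by
    intro T hT
    rw [hφ T, hφstar]
    have amgm := stmt_6_amgm hc hT hk
    have hZ : Tstar * Tstar ^ (k - 1) = Tstar ^ k := by
      rw [← Real.rpow_one_add' hc.le (show 1 + (k-1) ≠ 0 by linarith)]
      congr 1; ring
    have hTk : (T / r) ^ k = T ^ k / r ^ k := Real.div_rpow hT.le hr.le k
    have hTpos : (0:ℝ) < T ^ k := Real.rpow_pos_of_pos hT k
    have h3 : k * Tstar ^ k * T = k * (Tstar ^ (k-1) * T) * Tstar := by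
      rw [← hZ]; ring
    have main : ((1 - k) * Tstar ^ k - T ^ k) * Tstar ≤ -(k * Tstar ^ k * T) := by
      nlinarith [mul_le_mul_of_nonneg_right amgm hc.le]
    have hlog2 : Real.log ρ = (1 - k) * Tstar ^ k / (2 * r ^ k) := by
      field_simp at hlogrw ⊢; linarith
    rw [hTk, hlog2, div_le_div_iff₀ hT hc]
    have e1 : (2 * ((1 - k) * Tstar ^ k / (2 * r ^ k)) - T ^ k / r ^ k) * Tstar
        = ((1 - k) * Tstar ^ k - T ^ k) * Tstar / r ^ k := by field_simp
    have e2 : 2 * k * ((1 - k) * Tstar ^ k / (2 * r ^ k)) / (k - 1) * T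
        = -(k * Tstar ^ k * T) / r ^ k := by field_simp; ring
    rw [e1, e2]
    exact div_le_div_of_nonneg_right main hrk.le
  -- main inequality
  refine ⟨?_, ?_, hφstar, hφneg, ?_⟩
  · intro L hL T hT
    rw [hR, Real.rpow_def_of_pos hρ0, Real.rpow_def_of_pos hρ0, ← Real.exp_add,
      ← Real.exp_add, Real.exp_le_exp]
    have h1 : L * φ T ≤ L * φ Tstar := mul_le_mul_of_nonneg_left (key T hT) hL.le
    have h2 : L * φ T = Real.log ρ * (2 * (L / T - 1)) + -(L / T) * (T / r) ^ k
        - Real.log ρ * (-2) := by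
      rw [hφ]; field_simp; ring
    linarith
  · intro L hL
    rw [hR, Real.rpow_def_of_pos hρ0, Real.rpow_def_of_pos hρ0, ← Real.exp_add,
      ← Real.exp_add]
    congr 1
    rw [hφ]
    field_simp
    ring
  · intro L₁ L₂ hL₁ hL₂
    have : Real.exp (L₂ * φ Tstar) < Real.exp (L₁ * φ Tstar) := by
      rw [Real.exp_lt_exp]
      nlinarith
    have hpos : (0:ℝ) < ρ ^ (-2:ℝ) := Real.rpow_pos_of_pos hρ0 _
    nlinarith
end

section
/- Given R₀ ∈ (0,1) with R₀ < ρ^{-2}, ρ ∈ (0,1), k > 1, r > 0, define the maximal longevity L(T) = (ln R₀ + 2 ln ρ)/φ(T), where φ(T) = (2 ln ρ - (T/r)^k)/T < 0. Then L(T) is maximized at T = T* = (2 r^k ln ρ/(1-k))^{1/k}. -/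
/-- Given a reliability requirement `R₀ ∈ (0,1)` with `R₀ < ρ⁻²`, the maximal
longevity `L(T) = (ln R₀ + 2 ln ρ)/φ(T)` is maximized at
`T* = (2 r^k ln ρ/(1-k))^(1/k)`. -/
theorem stmt_7 (ρ r k R₀ : ℝ) (hρ : ρ ∈ Set.Ioo (0:ℝ) 1) (hr : 0 < r) (hk : 1 < k)
    (hR₀ : R₀ ∈ Set.Ioo (0:ℝ) 1) (hR₀ρ : R₀ < ρ ^ (-2 : ℝ))
    (φ : ℝ → ℝ) (hφ : ∀ T, φ T = (2 * Real.log ρ - (T / r) ^ k) / T)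
    (Lfun : ℝ → ℝ) (hLfun : ∀ T, Lfun T = (Real.log R₀ + 2 * Real.log ρ) / φ T)
    (Tstar : ℝ) (hTstar : Tstar = (2 * r ^ k * Real.log ρ / (1 - k)) ^ (1 / k)) :
    (∀ T : ℝ, 0 < T → φ T < 0) ∧ (∀ T : ℝ, 0 < T → Lfun T ≤ Lfun Tstar) := by
  obtain ⟨hρ0, hρ1⟩ := hρ
  have hlogρ : Real.log ρ < 0 := Real.log_neg hρ0 hρ1
  have hk0 : (0:ℝ) < k := by linarith
  have hk' : k ≠ 0 := ne_of_gt hk0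
  have hrk : (0:ℝ) < r ^ k := Real.rpow_pos_of_pos hr k
  -- φ negative on positives
  have hφneg : ∀ T : ℝ, 0 < T → φ T < 0 := by
    intro T hT
    rw [hφ]
    apply div_neg_of_neg_of_pos _ hT
    have : (0:ℝ) < (T / r) ^ k := Real.rpow_pos_of_pos (div_pos hT hr) k
    linarith
  refine ⟨hφneg, ?_⟩
  -- Tstar positive
  have hX : (0:ℝ) < 2 * r ^ k * Real.log ρ / (1 - k) :=
    div_pos_of_neg_of_neg (by nlinarith) (by linarith)
  have hs : 0 < Tstar := hTstar ▸ Real.rpow_pos_of_pos hX (1 / k)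
  -- Tstar ^ k
  have hsk : Tstar ^ k = 2 * r ^ k * Real.log ρ / (1 - k) := by
    rw [hTstar, ← Real.rpow_mul hX.le, one_div_mul_cancel hk', Real.rpow_one]
  have hsk' : (1 - k) * Tstar ^ k = 2 * r ^ k * Real.log ρ := by
    have h1k : (1:ℝ) - k ≠ 0 := by linarith
    rw [hsk]; field_simp
  have hskpos : (0:ℝ) < Tstar ^ k := Real.rpow_pos_of_pos hs k
  -- numerator negative
  have hN : Real.log R₀ + 2 * Real.log ρ < 0 := by
    have := Real.log_lt_log hR₀.1 hR₀ρ
    rw [Real.log_rpow hρ0] at this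
    linarith
  intro T hT
  -- key : φ T ≤ φ Tstar
  have hTk : (0:ℝ) < T ^ k := Real.rpow_pos_of_pos hT k
  have hber : 1 + k * (T / Tstar - 1) ≤ (T / Tstar) ^ k := by
    have := one_add_mul_self_le_rpow_one_add
      (s := T / Tstar - 1) (by nlinarith [div_pos hT hs]) hk.le
    simpa using this
  have hdiv1 : (T / Tstar) ^ k = T ^ k / Tstar ^ k := Real.div_rpow hT.le hs.le k
  have hdiv2 : (T / r) ^ k = T ^ k / r ^ k := Real.div_rpow hT.le hr.le k
  have hdiv3 : (Tstar / r) ^ k = Tstar ^ k / r ^ k := Real.div_rpow hs.le hr.le k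
  have h2 : (Tstar + k * (T - Tstar)) * Tstar ^ k ≤ T ^ k * Tstar := by
    have h1 : (1 + k * (T / Tstar - 1)) * Tstar ^ k ≤ T ^ k :=
      (le_div_iff₀ hskpos).mp (hdiv1 ▸ hber)
    have e : (1 + k * (T / Tstar - 1)) * Tstar = Tstar + k * (T - Tstar) := by
      field_simp
    nlinarith [h1, hs]
  have hkey : φ T ≤ φ Tstar := by
    rw [hφ, hφ, div_le_div_iff₀ hT hs, hdiv2, hdiv3, ← sub_nonneg]
    have expand : ((2 * Real.log ρ - Tstar ^ k / r ^ k) * T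
          - (2 * Real.log ρ - T ^ k / r ^ k) * Tstar) * r ^ k
        = T ^ k * Tstar - (Tstar + k * (T - Tstar)) * Tstar ^ k := by
      field_simp
      linear_combination -(T - Tstar) * hsk'
    have hDrk : 0 ≤ ((2 * Real.log ρ - Tstar ^ k / r ^ k) * T
          - (2 * Real.log ρ - T ^ k / r ^ k) * Tstar) * r ^ k := by
      rw [expand]; linarith
    nlinarith [hDrk, hrk]
  -- conclude
  have hφT : φ T < 0 := hφneg T hT
  have hφs : φ Tstar < 0 := hφneg Tstar hs
  rw [hLfun, hLfun, div_eq_mul_inv, div_eq_mul_inv]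
  have hi : (φ Tstar)⁻¹ ≤ (φ T)⁻¹ := (inv_le_inv_of_neg hφs hφT).mpr hkey
  exact mul_le_mul_of_nonpos_left hi hN.le
end
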